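/- Let L = ⊕_{g∈G} L_g be a (G,θ)-Lie algebra over ℂ for a finite abelian group G and color function θ, and let z ∈ Z(L) be homogeneous of degree g with θ(g,a) = θ(a,g) = 1 for all a ∈ G and θ(g,g) = 1. Then for any α ∈ ℂ, the map R(x⊗y) = α⟨x,y⟩⊗z + θ(a,b) x⊗y (for x ∈ L_a, y ∈ L_b) satisfies the quantum Yang-Baxter equation R¹²R¹³R²³ = R²³R¹³R¹², and is invertible with inverse R⁻¹(x⊗y) = α⟨y,x⟩⊗z + θ(b,a) x⊗y. -/

import Mathlib

/-!
All identities are checked on homogeneous tensors, which span. Since `z` is central and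
`θ(g, ·) = θ(·, g) = 1`, a leg of `R` acting on a pair of factors one of which is `z` acts as
the identity. On `x ⊗ y ⊗ t` with `x ∈ L_a`, `y ∈ L_b`, `t ∈ L_c`, both sides of the
Yang–Baxter equation then expand into five terms; the coefficients of the terms with at most one
bracket agree by the bicharacter identities, and the `z ⊗ z` terms agree because the Jacobi
identity, rewritten with antisymmetry, says `⟨⟨x,y⟩,t⟩ = ⟨x,⟨y,t⟩⟩ + θ(b,c)⟨⟨x,t⟩,y⟩`.
Invertibility is a two-term computation with antisymmetry.
-/

open TensorProduct LinearMap

noncomputable section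

variable {k : Type*} [Field k]

/-- `R ⊗ I` acting on the first two factors of `V ⊗ (V ⊗ V)`. -/
def leg12 {V : Type*} [AddCommGroup V] [Module k V]
    (R : V ⊗[k] V →ₗ[k] V ⊗[k] V) :
    V ⊗[k] (V ⊗[k] V) →ₗ[k] V ⊗[k] (V ⊗[k] V) :=
  (TensorProduct.assoc k V V V).toLinearMap ∘ₗ R.rTensor V ∘ₗ
    (TensorProduct.assoc k V V V).symm.toLinearMap

/-- `I ⊗ R` acting on the last two factors. -/
def leg23 {V : Type*} [AddCommGroup V] [Module k V]
    (R : V ⊗[k] V →ₗ[k] V ⊗[k] V) :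
    V ⊗[k] (V ⊗[k] V) →ₗ[k] V ⊗[k] (V ⊗[k] V) :=
  R.lTensor V

/-- `R¹³ = (I⊗τ)(R⊗I)(I⊗τ)`. -/
def leg13 {V : Type*} [AddCommGroup V] [Module k V]
    (R : V ⊗[k] V →ₗ[k] V ⊗[k] V) :
    V ⊗[k] (V ⊗[k] V) →ₗ[k] V ⊗[k] (V ⊗[k] V) :=
  ((TensorProduct.comm k V V).toLinearMap.lTensor V) ∘ₗ leg12 R ∘ₗ
    ((TensorProduct.comm k V V).toLinearMap.lTensor V)

section HomogeneousExt

variable {R ι L M : Type*} [CommSemiring R] [AddCommMonoid L] [Module R L]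
  [AddCommMonoid M] [Module R M] {Lg : ι → Submodule R L}

theorem LinearMap.ext_of_iSup_eq_top (hL : iSup Lg = ⊤) {f g : L →ₗ[R] M}
    (h : ∀ i, ∀ x ∈ Lg i, f x = g x) : f = g := by
  refine LinearMap.ext_on (s := ⋃ i, (Lg i : Set L)) ?_ ?_
  · rw [← Submodule.iSup_eq_span, hL]
  · intro x hx
    obtain ⟨i, hi⟩ := Set.mem_iUnion.mp hx
    exact h i x hi

theorem TensorProduct.ext_of_iSup_eq_top (hL : iSup Lg = ⊤) {f g : L ⊗[R] L →ₗ[R] M}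
    (h : ∀ i j, ∀ x ∈ Lg i, ∀ y ∈ Lg j, f (x ⊗ₜ y) = g (x ⊗ₜ y)) : f = g :=
  curry_injective <| LinearMap.ext_of_iSup_eq_top hL fun i x hx =>
    LinearMap.ext_of_iSup_eq_top hL fun j y hy => h i j x hx y hy

theorem TensorProduct.ext_threefold_of_iSup_eq_top (hL : iSup Lg = ⊤)
    {f g : L ⊗[R] (L ⊗[R] L) →ₗ[R] M}
    (h : ∀ i j l, ∀ x ∈ Lg i, ∀ y ∈ Lg j, ∀ t ∈ Lg l,
      f (x ⊗ₜ (y ⊗ₜ t)) = g (x ⊗ₜ (y ⊗ₜ t))) : f = g :=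
  curry_injective <| LinearMap.ext_of_iSup_eq_top hL fun i x hx =>
    TensorProduct.ext_of_iSup_eq_top hL fun j l y hy t ht => h i j l x hx y hy t ht

end HomogeneousExt

section Legs

variable {V : Type*} [AddCommGroup V] [Module k V] (R : V ⊗[k] V →ₗ[k] V ⊗[k] V)

theorem leg12_tmul (x y t : V) :
    leg12 R (x ⊗ₜ (y ⊗ₜ t)) = TensorProduct.assoc k V V V (R (x ⊗ₜ y) ⊗ₜ t) := rfl

theorem leg23_tmul (x : V) (w : V ⊗[k] V) : leg23 R (x ⊗ₜ w) = x ⊗ₜ R w := rfl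

theorem leg13_tmul (x y t : V) :
    leg13 R (x ⊗ₜ (y ⊗ₜ t)) =
      (TensorProduct.comm k V V).toLinearMap.lTensor V (leg12 R (x ⊗ₜ (t ⊗ₜ y))) := rfl

end Legs

structure IsCommutationFactor {G : Type*} [AddCommGroup G] (θ : G → G → k) : Prop where
  map_add_left : ∀ a b c : G, θ (a + b) c = θ a c * θ b c
  map_add_right : ∀ a b c : G, θ a (b + c) = θ a b * θ a c
  mul_swap : ∀ a b : G, θ a b * θ b a = 1

structure IsColorLieBracket {G L : Type*} [AddCommGroup G] [AddCommGroup L] [Module k L]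
    (θ : G → G → k) (Lg : G → Submodule k L) (br : L →ₗ[k] L →ₗ[k] L) : Prop where
  mem_add : ∀ a b : G, ∀ x ∈ Lg a, ∀ y ∈ Lg b, br x y ∈ Lg (a + b)
  antisymm : ∀ a b : G, ∀ x ∈ Lg a, ∀ y ∈ Lg b, br x y = -(θ a b • br y x)
  jacobi : ∀ a b c : G, ∀ x ∈ Lg a, ∀ y ∈ Lg b, ∀ t ∈ Lg c,
    θ c a • br x (br y t) + θ b c • br t (br x y) + θ a b • br y (br t x) = 0

namespace IsColorLieBracket

variable {G L : Type*} [AddCommGroup G] [AddCommGroup L] [Module k L]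
  {θ : G → G → k} {Lg : G → Submodule k L} {br : L →ₗ[k] L →ₗ[k] L}

theorem apply_central_eq_zero (hLie : IsColorLieBracket θ Lg br) {g : G} {z : L}
    (hzg : z ∈ Lg g) (hzc : ∀ x : L, br z x = 0) {a : G} {x : L} (hx : x ∈ Lg a) :
    br x z = 0 := by
  rw [hLie.antisymm a g x hx z hzg, hzc, smul_zero, neg_zero]

theorem bracket_bracket (hLie : IsColorLieBracket θ Lg br) (hθ : IsCommutationFactor θ)
    {a b c : G} {x y t : L} (hx : x ∈ Lg a) (hy : y ∈ Lg b) (ht : t ∈ Lg c) :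
    br (br x y) t = br x (br y t) + θ b c • br (br x t) y := by
  have hJ := hLie.jacobi a b c x hx y hy t ht
  rw [hLie.antisymm c (a + b) t ht _ (hLie.mem_add a b x hx y hy), hLie.antisymm c a t ht x hx,
    map_neg, map_smul, hLie.antisymm b (a + c) y hy _ (hLie.mem_add a c x hx t ht),
    hθ.map_add_right, hθ.map_add_right] at hJ
  have hca : θ c a ≠ 0 := left_ne_zero_of_mul_eq_one (hθ.mul_swap c a)
  suffices θ c a • (br x (br y t) + θ b c • br (br x t) y - br (br x y) t) = 0 from
    (sub_eq_zero.mp ((smul_eq_zero.mp this).resolve_left hca)).symm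
  rw [← hJ]
  match_scalars
  · ring
  · linear_combination (-(θ c a * θ b c)) * hθ.mul_swap a b
  · linear_combination θ c a * hθ.mul_swap b c

end IsColorLieBracket

def IsBracketOperator {G L : Type*} [AddCommGroup G] [AddCommGroup L] [Module k L]
    (θ : G → G → k) (Lg : G → Submodule k L) (br : L →ₗ[k] L →ₗ[k] L) (α : k) (z : L)
    (R : L ⊗[k] L →ₗ[k] L ⊗[k] L) : Prop :=
  ∀ a b : G, ∀ x ∈ Lg a, ∀ y ∈ Lg b, R (x ⊗ₜ y) = α • (br x y ⊗ₜ z) + θ a b • (x ⊗ₜ y)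

namespace IsBracketOperator

variable {G L : Type*} [AddCommGroup G] [AddCommGroup L] [Module k L]
  {θ : G → G → k} {Lg : G → Submodule k L} {br : L →ₗ[k] L →ₗ[k] L} {α : k} {g : G} {z : L}
  {R : L ⊗[k] L →ₗ[k] L ⊗[k] L}

theorem leg12_tmul_of_mem (hR : IsBracketOperator θ Lg br α z R) {a b : G} {x y : L}
    (hx : x ∈ Lg a) (hy : y ∈ Lg b) (t : L) :
    leg12 R (x ⊗ₜ (y ⊗ₜ t)) = α • (br x y ⊗ₜ (z ⊗ₜ t)) + θ a b • (x ⊗ₜ (y ⊗ₜ t)) := by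
  simp only [leg12_tmul, hR a b x hx y hy, add_tmul, ← smul_tmul', map_add, map_smul,
    TensorProduct.assoc_tmul]

theorem leg23_tmul_of_mem (hR : IsBracketOperator θ Lg br α z R) {b c : G} {y t : L}
    (hy : y ∈ Lg b) (ht : t ∈ Lg c) (x : L) :
    leg23 R (x ⊗ₜ (y ⊗ₜ t)) = α • (x ⊗ₜ (br y t ⊗ₜ z)) + θ b c • (x ⊗ₜ (y ⊗ₜ t)) := by
  rw [leg23_tmul, hR b c y hy t ht, tmul_add, tmul_smul, tmul_smul]

theorem leg13_tmul_of_mem (hR : IsBracketOperator θ Lg br α z R) {a c : G} {x t : L}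
    (hx : x ∈ Lg a) (ht : t ∈ Lg c) (y : L) :
    leg13 R (x ⊗ₜ (y ⊗ₜ t)) = α • (br x t ⊗ₜ (y ⊗ₜ z)) + θ a c • (x ⊗ₜ (y ⊗ₜ t)) := by
  rw [leg13_tmul, hR.leg12_tmul_of_mem hx ht]
  simp only [map_add, map_smul, lTensor_tmul, LinearEquiv.coe_coe, TensorProduct.comm_tmul]

theorem yangBaxter_tmul (hR : IsBracketOperator θ Lg br α z R)
    (hLie : IsColorLieBracket θ Lg br) (hθ : IsCommutationFactor θ)
    (hzg : z ∈ Lg g) (hzc : ∀ x : L, br z x = 0) (hga : ∀ a : G, θ g a = 1)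
    (hag : ∀ a : G, θ a g = 1) {a b c : G} {x y t : L}
    (hx : x ∈ Lg a) (hy : y ∈ Lg b) (ht : t ∈ Lg c) :
    leg12 R (leg13 R (leg23 R (x ⊗ₜ (y ⊗ₜ t)))) =
      leg23 R (leg13 R (leg12 R (x ⊗ₜ (y ⊗ₜ t)))) := by
  have hxy := hLie.mem_add a b x hx y hy
  have hxt := hLie.mem_add a c x hx t ht
  have hyt := hLie.mem_add b c y hy t ht
  simp only [hR.leg23_tmul_of_mem hy ht, hR.leg23_tmul_of_mem hzg hzg,
    hR.leg23_tmul_of_mem hzg ht, hR.leg23_tmul_of_mem hy hzg,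
    hR.leg13_tmul_of_mem hx hzg, hR.leg13_tmul_of_mem hx ht, hR.leg13_tmul_of_mem hxy ht,
    hR.leg12_tmul_of_mem hx hy, hR.leg12_tmul_of_mem hx hyt, hR.leg12_tmul_of_mem hxt hy,
    hLie.apply_central_eq_zero hzg hzc hx, hLie.apply_central_eq_zero hzg hzc hy,
    hzc, map_add, map_smul, zero_tmul, tmul_zero, smul_zero, zero_add, hga, hag, one_smul,
    hθ.map_add_left, hθ.map_add_right, smul_add, smul_smul]
  rw [hLie.bracket_bracket hθ hx hy ht, add_tmul]
  simp only [smul_add, ← smul_tmul', smul_smul]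
  match_scalars <;> first | ring1 | linear_combination (α * θ a b) * hθ.mul_swap b c

theorem yangBaxter (hR : IsBracketOperator θ Lg br α z R) (hL : iSup Lg = ⊤)
    (hLie : IsColorLieBracket θ Lg br) (hθ : IsCommutationFactor θ)
    (hzg : z ∈ Lg g) (hzc : ∀ x : L, br z x = 0) (hga : ∀ a : G, θ g a = 1)
    (hag : ∀ a : G, θ a g = 1) :
    leg12 R ∘ₗ leg13 R ∘ₗ leg23 R = leg23 R ∘ₗ leg13 R ∘ₗ leg12 R :=
  TensorProduct.ext_threefold_of_iSup_eq_top hL fun _ _ _ _ hx _ hy _ ht =>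
    hR.yangBaxter_tmul hLie hθ hzg hzc hga hag hx hy ht

/-- `S` has the shape of `R` with `θ` transposed and the bracket flipped, so this also gives
`R ∘ S = id`. -/
theorem comp_eq_id (hR : IsBracketOperator θ Lg br α z R) {S : L ⊗[k] L →ₗ[k] L ⊗[k] L}
    (hS : IsBracketOperator (fun a b => θ b a) Lg br.flip α z S) (hL : iSup Lg = ⊤)
    (hθsym : ∀ a b : G, θ a b * θ b a = 1)
    (hgrade : ∀ a b : G, ∀ x ∈ Lg a, ∀ y ∈ Lg b, br x y ∈ Lg (a + b))
    (hanti : ∀ a b : G, ∀ x ∈ Lg a, ∀ y ∈ Lg b, br x y = -(θ a b • br y x))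
    (hzg : z ∈ Lg g) (hzc : ∀ a : G, ∀ x ∈ Lg a, br z x = 0) (hga : ∀ a : G, θ g a = 1) :
    S ∘ₗ R = LinearMap.id := by
  refine TensorProduct.ext_of_iSup_eq_top hL fun a b x hx y hy => ?_
  have hxy := hgrade a b x hx y hy
  rw [comp_apply, hR a b x hx y hy, map_add, map_smul, map_smul, hS _ _ _ hxy _ hzg,
    hS a b x hx y hy, flip_apply, flip_apply, hzc _ _ hxy, hanti a b x hx y hy]
  simp only [id_apply, hga, zero_tmul, smul_zero, zero_add, neg_tmul, smul_add, smul_neg,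
    smul_smul, ← smul_tmul']
  match_scalars <;> first | ring1 | linear_combination hθsym a b

end IsBracketOperator

theorem yb_operator_from_G_theta_lie_algebra_general
    (G : Type*) [AddCommGroup G] [DecidableEq G]
    (θ : G → G → ℂ)
    (hθadd1 : ∀ a b c : G, θ (a + b) c = θ a c * θ b c)
    (hθadd2 : ∀ a b c : G, θ a (b + c) = θ a b * θ a c)
    (hθsym : ∀ a b : G, θ a b * θ b a = 1)
    (L : Type*) [AddCommGroup L] [Module ℂ L]
    (Lg : G → Submodule ℂ L) (hL : DirectSum.IsInternal Lg)
    (br : L →ₗ[ℂ] L →ₗ[ℂ] L)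
    (hgrade : ∀ a b : G, ∀ x ∈ Lg a, ∀ y ∈ Lg b, br x y ∈ Lg (a + b))
    (hanti : ∀ a b : G, ∀ x ∈ Lg a, ∀ y ∈ Lg b, br x y = -(θ a b • br y x))
    (hjacobi : ∀ a b c : G, ∀ x ∈ Lg a, ∀ y ∈ Lg b, ∀ t ∈ Lg c,
      θ c a • br x (br y t) + θ b c • br t (br x y) + θ a b • br y (br t x) = 0)
    (g : G) (z : L) (hzg : z ∈ Lg g) (hzc : ∀ x : L, br z x = 0)
    (hga : ∀ a : G, θ g a = 1) (hag : ∀ a : G, θ a g = 1)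
    (α : ℂ)
    (R S : L ⊗[ℂ] L →ₗ[ℂ] L ⊗[ℂ] L)
    (hR : ∀ a b : G, ∀ x ∈ Lg a, ∀ y ∈ Lg b,
      R (x ⊗ₜ[ℂ] y) = α • (br x y ⊗ₜ[ℂ] z) + θ a b • (x ⊗ₜ[ℂ] y))
    (hS : ∀ a b : G, ∀ x ∈ Lg a, ∀ y ∈ Lg b,
      S (x ⊗ₜ[ℂ] y) = α • (br y x ⊗ₜ[ℂ] z) + θ b a • (x ⊗ₜ[ℂ] y)) :
    (leg12 R ∘ₗ leg13 R ∘ₗ leg23 R = leg23 R ∘ₗ leg13 R ∘ₗ leg12 R) ∧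
    S ∘ₗ R = LinearMap.id ∧ R ∘ₗ S = LinearMap.id := by
  have hθ : IsCommutationFactor θ := ⟨hθadd1, hθadd2, hθsym⟩
  have hLie : IsColorLieBracket θ Lg br := ⟨hgrade, hanti, hjacobi⟩
  have hR' : IsBracketOperator θ Lg br α z R := hR
  have hLtop := hL.submodule_iSup_eq_top
  refine ⟨hR'.yangBaxter hLtop hLie hθ hzg hzc hga hag,
    hR'.comp_eq_id hS hLtop hθsym hgrade hanti hzg (fun _ _ _ => hzc _) hga, ?_⟩
  exact IsBracketOperator.comp_eq_id (θ := fun a b => θ b a) (br := br.flip) hS hR hLtop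
    (fun a b => hθsym b a) (fun a b x hx y hy => add_comm a b ▸ hgrade b a y hy x hx)
    (fun a b x hx y hy => hanti b a y hy x hx) hzg
    (fun _ _ hx => hLie.apply_central_eq_zero hzg hzc hx) hag

theorem yb_operator_from_G_theta_lie_algebra
    (G : Type*) [AddCommGroup G] [Fintype G] [DecidableEq G]
    (θ : G → G → ℂ) (hθ0 : ∀ a b : G, θ a b ≠ 0)
    (hθadd1 : ∀ a b c : G, θ (a + b) c = θ a c * θ b c)
    (hθadd2 : ∀ a b c : G, θ a (b + c) = θ a b * θ a c)
    (hθsym : ∀ a b : G, θ a b * θ b a = 1)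
    (L : Type*) [AddCommGroup L] [Module ℂ L]
    (Lg : G → Submodule ℂ L) (hL : DirectSum.IsInternal Lg)
    (br : L →ₗ[ℂ] L →ₗ[ℂ] L)
    (hgrade : ∀ a b : G, ∀ x ∈ Lg a, ∀ y ∈ Lg b, br x y ∈ Lg (a + b))
    (hanti : ∀ a b : G, ∀ x ∈ Lg a, ∀ y ∈ Lg b, br x y = -(θ a b • br y x))
    (hjacobi : ∀ a b c : G, ∀ x ∈ Lg a, ∀ y ∈ Lg b, ∀ t ∈ Lg c,
      θ c a • br x (br y t) + θ b c • br t (br x y) + θ a b • br y (br t x) = 0)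
    (g : G) (z : L) (hzg : z ∈ Lg g) (hzc : ∀ x : L, br z x = 0)
    (hga : ∀ a : G, θ g a = 1) (hag : ∀ a : G, θ a g = 1) (hgg : θ g g = 1)
    (α : ℂ)
    (R S : L ⊗[ℂ] L →ₗ[ℂ] L ⊗[ℂ] L)
    (hR : ∀ a b : G, ∀ x ∈ Lg a, ∀ y ∈ Lg b,
      R (x ⊗ₜ[ℂ] y) = α • (br x y ⊗ₜ[ℂ] z) + θ a b • (x ⊗ₜ[ℂ] y))
    (hS : ∀ a b : G, ∀ x ∈ Lg a, ∀ y ∈ Lg b,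
      S (x ⊗ₜ[ℂ] y) = α • (br y x ⊗ₜ[ℂ] z) + θ b a • (x ⊗ₜ[ℂ] y)) :
    (leg12 R ∘ₗ leg13 R ∘ₗ leg23 R = leg23 R ∘ₗ leg13 R ∘ₗ leg12 R) ∧
    S ∘ₗ R = LinearMap.id ∧ R ∘ₗ S = LinearMap.id :=
  yb_operator_from_G_theta_lie_algebra_general G θ hθadd1 hθadd2 hθsym L Lg hL br hgrade hanti
    hjacobi g z hzg hzc hga hag α R S hR hS
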